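/- arXiv:1901.06290 — 4 statements merged into one kernel-verified Lean document; each statement's English description precedes it below -/
import Mathlib

section
/- Let X = {0} ∪ {1/n : n ∈ ℕ, n ≥ 1} with the metric inherited from ℝ. For every σ ∈ (0,1) and every natural number n with n > max{2/σ, 2}, setting δ = 2/(σ·n·(n−1)), there is no family 𝒰 of pairwise disjoint open subsets of X that covers X, has mesh at most δ, and has Lebesgue number at least σδ. In particular, X does not have capacity dimension 0. -/
/-!
In a cover by pairwise disjoint sets with Lebesgue number `ε`, each member contains the
`ε`-ball around each of its points, so it is closed under steps of length `< ε`. In `X` the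
gaps `1/k - 1/(k+1)` shrink to `0` and the points `1/k` accumulate at `0`; hence, for
`ε = σδ = 2/(n(n-1))`, the member containing `1/(n-1)` contains every `1/k` with `k ≥ n-1`
and also `0`. Its diameter is then at least `1/(n-1)`, which exceeds `δ` because `σn > 2`.
-/

/-- The set `{0} ∪ {1/n : n ∈ ℕ, n ≥ 1}` in `ℝ`. -/
def seqSet : Set ℝ := {0} ∪ {x : ℝ | ∃ n : ℕ, 1 ≤ n ∧ x = 1 / (n : ℝ)}

/-- `X` has capacity dimension `0`: there is `σ ∈ (0,1)` such that every sufficiently small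
`δ > 0` admits a cover of `X` by pairwise disjoint open sets with mesh at most `δ` and
Lebesgue number at least `σδ`. -/
def HasCapDimZero (X : Type*) [MetricSpace X] : Prop :=
  ∃ σ : ℝ, σ ∈ Set.Ioo (0 : ℝ) 1 ∧ ∃ δ₀ : ℝ, 0 < δ₀ ∧ ∀ δ : ℝ, 0 < δ → δ ≤ δ₀ →
    ∃ 𝒰 : Set (Set X), (∀ U ∈ 𝒰, IsOpen U) ∧ (∀ x : X, ∃ U ∈ 𝒰, x ∈ U) ∧
      𝒰.Pairwise Disjoint ∧ (∀ U ∈ 𝒰, Metric.diam U ≤ δ) ∧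
      (∀ x : X, ∃ U ∈ 𝒰, Metric.ball x (σ * δ) ⊆ U)

open Metric Filter Topology

section LebesgueNumber

variable {X : Type*} [PseudoMetricSpace X]

theorem ball_subset_of_mem_of_pairwise_disjoint {𝒰 : Set (Set X)} {ε : ℝ} (hε : 0 < ε)
    (hdisj : 𝒰.Pairwise Disjoint) (hleb : ∀ x, ∃ V ∈ 𝒰, ball x ε ⊆ V)
    {U : Set X} (hU : U ∈ 𝒰) {x : X} (hx : x ∈ U) : ball x ε ⊆ U := by
  obtain ⟨V, hV, hxV⟩ := hleb x
  obtain rfl : U = V := by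
    by_contra hne
    exact Set.disjoint_left.1 (hdisj hU hV hne) hx (hxV (mem_ball_self hε))
  exact hxV

theorem mem_of_tendsto_of_ball_subset {U : Set X} {ε : ℝ} (hU : ∀ x ∈ U, ball x ε ⊆ U)
    {u : ℕ → X} {m : ℕ} (hm : u m ∈ U) (hstep : ∀ k ≥ m, dist (u (k + 1)) (u k) < ε)
    {a : X} (ha : Tendsto u atTop (𝓝 a)) : a ∈ U := by
  have hmem : ∀ k ≥ m, u k ∈ U := by
    intro k hk
    induction k, hk using Nat.le_induction with
    | base => exact hm
    | succ k hk ih => exact hU _ ih (hstep k hk)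
  have hε : 0 < ε := dist_nonneg.trans_lt (hstep m le_rfl)
  obtain ⟨N, hN⟩ := Metric.tendsto_atTop.1 ha ε hε
  refine hU _ (hmem _ (le_max_right N m)) ?_
  rw [mem_ball, dist_comm]
  exact hN _ (le_max_left N m)

end LebesgueNumber

theorem seqSet_subset_Icc : seqSet ⊆ Set.Icc 0 1 := by
  rintro a (rfl | ⟨m, hm, rfl⟩)
  · simp
  · have hm' : (1 : ℝ) ≤ m := by exact_mod_cast hm
    exact ⟨by positivity, (div_le_one (by linarith)).2 hm'⟩

instance : BoundedSpace seqSet :=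
  ((isBounded_Icc 0 1).subset seqSet_subset_Icc).boundedSpace_val

def seqZero : seqSet := ⟨0, Or.inl rfl⟩

noncomputable def seqPt (k : ℕ) : seqSet :=
  ⟨1 / ((k : ℝ) + 1), Or.inr ⟨k + 1, Nat.le_add_left 1 k, by push_cast; ring⟩⟩

theorem dist_seqZero_seqPt (k : ℕ) : dist seqZero (seqPt k) = 1 / ((k : ℝ) + 1) := by
  simp only [seqZero, seqPt, Subtype.dist_eq, Real.dist_eq, zero_sub, abs_neg]
  exact abs_of_pos (by positivity)

theorem dist_seqPt_succ_le {m k : ℕ} (hmk : m ≤ k) :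
    dist (seqPt (k + 1)) (seqPt k) ≤ 1 / (((m : ℝ) + 1) * ((m : ℝ) + 2)) := by
  have hmk' : (m : ℝ) ≤ k := by exact_mod_cast hmk
  have hdist : dist (seqPt (k + 1)) (seqPt k) = 1 / (((k : ℝ) + 1) * ((k : ℝ) + 2)) := by
    simp only [seqPt, Subtype.dist_eq, Real.dist_eq]
    push_cast
    rw [abs_of_nonpos (by rw [sub_nonpos]; gcongr; linarith)]
    field_simp
    ring
  rw [hdist]
  gcongr

theorem tendsto_seqPt : Tendsto seqPt atTop (𝓝 seqZero) :=
  tendsto_subtype_rng.2 tendsto_one_div_add_atTop_nhds_zero_nat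

theorem seqSet_exists_lt_diam {𝒰 : Set (Set seqSet)} {ε δ : ℝ} {m : ℕ}
    (hdisj : 𝒰.Pairwise Disjoint) (hleb : ∀ x, ∃ U ∈ 𝒰, ball x ε ⊆ U)
    (hε : 1 / (((m : ℝ) + 1) * ((m : ℝ) + 2)) < ε) (hδ : δ < 1 / ((m : ℝ) + 1)) :
    ∃ U ∈ 𝒰, δ < diam U := by
  have hε0 : 0 < ε := lt_trans (by positivity) hε
  obtain ⟨U, hU, hball⟩ := hleb (seqPt m)
  have hm : seqPt m ∈ U := hball (mem_ball_self hε0)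
  have h0 : seqZero ∈ U :=
    mem_of_tendsto_of_ball_subset
      (fun x hx => ball_subset_of_mem_of_pairwise_disjoint hε0 hdisj hleb hU hx) hm
      (fun k hk => (dist_seqPt_succ_le hk).trans_lt hε) tendsto_seqPt
  refine ⟨U, hU, hδ.trans_le ?_⟩
  rw [← dist_seqZero_seqPt]
  exact dist_le_diam_of_mem (Bornology.IsBounded.all U) h0 hm

theorem seqSet_exists_lt_diam_of_lebesgue_scale {σ : ℝ} (hσ : 0 < σ) {n : ℕ}
    (hn : max (2 / σ) 2 < (n : ℝ)) {𝒰 : Set (Set seqSet)} (hdisj : 𝒰.Pairwise Disjoint)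
    (hleb : ∀ x, ∃ U ∈ 𝒰, ball x (σ * (2 / (σ * n * ((n : ℝ) - 1)))) ⊆ U) :
    ∃ U ∈ 𝒰, 2 / (σ * n * ((n : ℝ) - 1)) < diam U := by
  have hn2 : 2 < n := by exact_mod_cast (le_max_right _ _).trans_lt hn
  have hσn : 2 < σ * n := by
    have := (div_lt_iff₀ hσ).1 ((le_max_left _ _).trans_lt hn); linarith
  obtain ⟨m, rfl⟩ : ∃ m, n = m + 2 := ⟨n - 2, by omega⟩
  have hpred : ((m + 2 : ℕ) : ℝ) - 1 = m + 1 := by push_cast; ring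
  have hε : σ * (2 / (σ * ↑(m + 2) * (m + 1))) = 2 / (((m : ℝ) + 1) * ((m : ℝ) + 2)) := by
    push_cast; field_simp
  rw [hpred, hε] at hleb
  rw [hpred]
  refine seqSet_exists_lt_diam hdisj hleb (by gcongr; norm_num) ?_
  push_cast at hσn ⊢
  rw [div_lt_div_iff₀ (by positivity) (by positivity)]
  nlinarith

theorem exists_nat_lebesgue_scale_le {σ δ₀ : ℝ} (hσ : 0 < σ) (hδ₀ : 0 < δ₀) :
    ∃ n : ℕ, max (2 / σ) 2 < (n : ℝ) ∧ 0 < 2 / (σ * n * ((n : ℝ) - 1)) ∧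
      2 / (σ * n * ((n : ℝ) - 1)) ≤ δ₀ := by
  obtain ⟨n, hn⟩ := exists_nat_gt (max (max (2 / σ) 2) (2 / (σ * δ₀)))
  rw [max_lt_iff] at hn
  obtain ⟨hn, hnδ⟩ := hn
  have hn2 : (2 : ℝ) < n := (le_max_right _ _).trans_lt hn
  have hden : 0 < σ * n * ((n : ℝ) - 1) := mul_pos (by positivity) (by linarith)
  refine ⟨n, hn, by positivity, ?_⟩
  rw [div_lt_iff₀ (by positivity)] at hnδ
  rw [div_le_iff₀ hden]
  nlinarith

/-- For `X = {0} ∪ {1/n : n ≥ 1} ⊆ ℝ`, for every `σ ∈ (0,1)` and every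
`n > max (2/σ) 2`, with `δ = 2/(σ·n·(n−1))` there is no cover of `X` by pairwise disjoint
open sets of mesh at most `δ` and Lebesgue number at least `σδ`. In particular `X` does not
have capacity dimension `0`. -/
theorem statement6 :
    (∀ σ : ℝ, σ ∈ Set.Ioo (0 : ℝ) 1 → ∀ n : ℕ, max (2 / σ) 2 < (n : ℝ) →
      ¬ ∃ 𝒰 : Set (Set ↥seqSet),
        (∀ U ∈ 𝒰, IsOpen U) ∧
        (∀ x : ↥seqSet, ∃ U ∈ 𝒰, x ∈ U) ∧
        𝒰.Pairwise Disjoint ∧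
        (∀ U ∈ 𝒰, Metric.diam U ≤ 2 / (σ * n * ((n : ℝ) - 1))) ∧
        (∀ x : ↥seqSet, ∃ U ∈ 𝒰,
          Metric.ball x (σ * (2 / (σ * n * ((n : ℝ) - 1)))) ⊆ U)) ∧
    ¬ HasCapDimZero ↥seqSet := by
  refine ⟨?_, ?_⟩
  · rintro σ ⟨hσ, -⟩ n hn ⟨𝒰, -, -, hdisj, hmesh, hleb⟩
    obtain ⟨U, hU, hlt⟩ := seqSet_exists_lt_diam_of_lebesgue_scale hσ hn hdisj hleb
    exact (hmesh U hU).not_gt hlt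
  · rintro ⟨σ, ⟨hσ, -⟩, δ₀, hδ₀, hcap⟩
    obtain ⟨n, hn, hδ, hδle⟩ := exists_nat_lebesgue_scale_le hσ hδ₀
    obtain ⟨𝒰, -, -, hdisj, hmesh, hleb⟩ := hcap _ hδ hδle
    obtain ⟨U, hU, hlt⟩ := seqSet_exists_lt_diam_of_lebesgue_scale hσ hn hdisj hleb
    exact (hmesh U hU).not_gt hlt
end

section
/- Let n ≥ 1 and let F : [0,1]^n → [0,1]^n be a continuous map such that F(A_i) ⊆ A_i and F(O_i) ⊆ O_i for every 1 ≤ i ≤ n. Then F(∂[0,1]^n) ⊆ ∂[0,1]^n and the restriction of F to ∂[0,1]^n is homotopic, within ∂[0,1]^n, to the identity map of ∂[0,1]^n. -/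
/-- The unit cube `[0,1]^n` in `ℝ^n`. -/
def unitCube (n : ℕ) : Set (Fin n → ℝ) :=
  {x | ∀ i : Fin n, x i ∈ Set.Icc (0 : ℝ) 1}

/-- The boundary `∂[0,1]^n` of the unit cube, i.e. the union of all the faces
`A_i = {x : x_i = 0}` and `O_i = {x : x_i = 1}`, viewed as a subset of the cube. -/
def cubeBoundary (n : ℕ) : Set ↥(unitCube n) :=
  {x | ∃ i : Fin n, (x : Fin n → ℝ) i = 0 ∨ (x : Fin n → ℝ) i = 1}

/-- For `n ≥ 1`, a continuous self-map `F` of the cube `[0,1]^n` preserving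
each axial face `A_i = {x : x_i = 0}` and each opposite face `O_i = {x : x_i = 1}` maps the
boundary `∂[0,1]^n` into itself, and its restriction to the boundary is homotopic, within the
boundary, to the identity. -/
theorem statement14 (n : ℕ) (hn : 1 ≤ n)
    (F : ↥(unitCube n) → ↥(unitCube n)) (hF : Continuous F)
    (hA : ∀ (i : Fin n) (x : ↥(unitCube n)),
      (x : Fin n → ℝ) i = 0 → (F x : Fin n → ℝ) i = 0)
    (hO : ∀ (i : Fin n) (x : ↥(unitCube n)),
      (x : Fin n → ℝ) i = 1 → (F x : Fin n → ℝ) i = 1) :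
    Set.MapsTo F (cubeBoundary n) (cubeBoundary n) ∧
      ∃ g : C(↥(cubeBoundary n), ↥(cubeBoundary n)),
        (∀ x : ↥(cubeBoundary n), (g x : ↥(unitCube n)) = F ↑x) ∧
          g.Homotopic (ContinuousMap.id ↥(cubeBoundary n)) := by
  have hmap : Set.MapsTo F (cubeBoundary n) (cubeBoundary n) := by
    rintro x ⟨i, h0 | h1⟩
    · exact ⟨i, Or.inl (hA i x h0)⟩
    · exact ⟨i, Or.inr (hO i x h1)⟩
  refine ⟨hmap, ?_⟩
  -- the restriction of `F` to the boundary
  have gcont : Continuous fun x : ↥(cubeBoundary n) =>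
      (⟨F ↑x, hmap x.2⟩ : ↥(cubeBoundary n)) :=
    (hF.comp continuous_subtype_val).subtype_mk _
  refine ⟨⟨fun x => ⟨F ↑x, hmap x.2⟩, gcont⟩, fun x => rfl, ?_⟩
  -- straight-line homotopy
  have cube_mem : ∀ (t : unitInterval) (x : ↥(cubeBoundary n)),
      (fun i => (1 - (t : ℝ)) * (F ↑x : Fin n → ℝ) i
        + (t : ℝ) * ((x : ↥(unitCube n)) : Fin n → ℝ) i) ∈ unitCube n := by
    intro t x i
    obtain ⟨hF0, hF1⟩ := (F ↑x).2 i
    obtain ⟨hx0, hx1⟩ := (x : ↥(unitCube n)).2 i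
    obtain ⟨ht0, ht1⟩ := t.2
    constructor <;> beta_reduce <;> nlinarith
  have bdry_mem : ∀ (t : unitInterval) (x : ↥(cubeBoundary n)),
      (⟨_, cube_mem t x⟩ : ↥(unitCube n)) ∈ cubeBoundary n := by
    intro t x
    obtain ⟨i, h0 | h1⟩ := x.2
    · refine ⟨i, Or.inl ?_⟩
      show (1 - (t : ℝ)) * _ + (t : ℝ) * _ = 0
      rw [hA i _ h0, h0]; ring
    · refine ⟨i, Or.inr ?_⟩
      show (1 - (t : ℝ)) * _ + (t : ℝ) * _ = 1
      rw [hO i _ h1, h1]; ring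
  have Hcont : Continuous fun p : unitInterval × ↥(cubeBoundary n) =>
      (⟨⟨_, cube_mem p.1 p.2⟩, bdry_mem p.1 p.2⟩ : ↥(cubeBoundary n)) := by
    refine (Continuous.subtype_mk ?_ _).subtype_mk _
    refine continuous_pi fun i => ?_
    have ht : Continuous fun p : unitInterval × ↥(cubeBoundary n) => (p.1 : ℝ) :=
      continuous_subtype_val.comp continuous_fst
    have hFi : Continuous fun p : unitInterval × ↥(cubeBoundary n) =>
        (F ↑p.2 : Fin n → ℝ) i :=
      (continuous_apply i).comp (continuous_subtype_val.comp
        (hF.comp (continuous_subtype_val.comp continuous_snd)))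
    have hxi : Continuous fun p : unitInterval × ↥(cubeBoundary n) =>
        ((p.2 : ↥(unitCube n)) : Fin n → ℝ) i :=
      (continuous_apply i).comp (continuous_subtype_val.comp
        (continuous_subtype_val.comp continuous_snd))
    exact ((continuous_const.sub ht).mul hFi).add (ht.mul hxi)
  refine ⟨⟨⟨fun p => ⟨⟨_, cube_mem p.1 p.2⟩, bdry_mem p.1 p.2⟩, Hcont⟩, ?_, ?_⟩⟩
  · intro x
    refine Subtype.ext (Subtype.ext (funext fun i => ?_))
    show (1 - ((0 : unitInterval) : ℝ)) * _ + _ * _ = _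
    norm_num
  · intro x
    refine Subtype.ext (Subtype.ext (funext fun i => ?_))
    show (1 - ((1 : unitInterval) : ℝ)) * _ + _ * _ = _
    norm_num
end

section
/- Let n ≥ 1 and let F : [0,1]^n → [0,1]^n be a continuous map such that F(A_i) ⊆ A_i and F(O_i) ⊆ O_i for every 1 ≤ i ≤ n. Then F is surjective. -/
/-!
Fix `y` in the cube and label a point `x` by the first coordinate `i` with `x i = 0` or
`F(x)_i < y_i` (by `n` if there is none). On the grid `{0, …, p}^n` this is a Sperner labelling
of Kuhn's triangulation: the face `x_i = 0` only carries labels `≤ i`, and the face `x_i = p`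
never carries the label `i`, because there `F(x)_i = 1 ≥ y_i`. So some Kuhn simplex carries all
the labels `0, …, n`; along it `F_i - y_i` is `≤ 0` at the vertex labelled `i` and `≥ 0` at the
vertex labelled `i + 1`. The simplex has diameter `1/p`, so uniform continuity puts `y` within
any `ε` of the range of `F`, which is compact.

Sperner's lemma for Kuhn's triangulation is proved by induction on the dimension, counting
modulo 2 the pairs (simplex, facet with all labels `0, …, n`). Counted by simplices, each fully
labelled simplex contributes one such facet and every other simplex an even number. Counted by
facets, Kuhn's pivot rule pairs off the facets shared by two simplices; the unpaired ones lie on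
the face `x_n = 0` and are exactly the fully labelled simplices of dimension `n`.
-/

open Finset

namespace Finset

variable {α β : Type*} [DecidableEq α] [DecidableEq β] {S : Finset α} {T : Finset β} {top : β}
  {c : α → β}

theorem image_erase_eq_of_subset_image_erase {k : α} (hk : k ∈ S) (hcard : #S = #T + 1)
    (hT : T ⊆ (S.erase k).image c) : (S.erase k).image c = T ∧ Set.InjOn c (S.erase k) := by
  have hcard' : #(S.erase k) = #T := by rw [card_erase_of_mem hk, hcard, Nat.add_sub_cancel]
  have himage : (S.erase k).image c = T :=
    (eq_of_subset_of_card_le hT (card_image_le.trans hcard'.le)).symm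
  refine ⟨himage, card_image_iff.mp ?_⟩
  rw [himage, hcard']

theorem card_filter_subset_image_erase_of_subset (hcard : #S = #T + 1) (htop : top ∉ T)
    (hfull : insert top T ⊆ S.image c) : #{k ∈ S | T ⊆ (S.erase k).image c} = 1 := by
  obtain ⟨k₀, hk₀, hck₀⟩ := mem_image.mp (hfull (mem_insert_self top T))
  refine card_eq_one.mpr ⟨k₀, eq_singleton_iff_unique_mem.mpr
    ⟨mem_filter.mpr ⟨hk₀, fun m hm => ?_⟩, fun k hk => ?_⟩⟩
  · obtain ⟨j, hj, rfl⟩ := mem_image.mp (hfull (mem_insert_of_mem hm))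
    exact mem_image_of_mem c (mem_erase.mpr ⟨by rintro rfl; exact htop (hck₀ ▸ hm), hj⟩)
  · by_contra hne
    have : top ∈ (S.erase k).image c :=
      hck₀ ▸ mem_image_of_mem c (mem_erase.mpr ⟨Ne.symm hne, hk₀⟩)
    obtain ⟨hkS, hT⟩ := mem_filter.mp hk
    exact htop ((image_erase_eq_of_subset_image_erase hkS hcard hT).1 ▸ this)

theorem card_filter_subset_image_erase_of_not_subset (hcard : #S = #T + 1)
    (hc : ∀ k ∈ S, c k ∈ insert top T) (hfull : ¬insert top T ⊆ S.image c) :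
    #{k ∈ S | T ⊆ (S.erase k).image c} = 0 ∨ #{k ∈ S | T ⊆ (S.erase k).image c} = 2 := by
  set D := {k ∈ S | T ⊆ (S.erase k).image c}
  obtain hempty | ⟨k₀, hk₀⟩ := D.eq_empty_or_nonempty
  · exact Or.inl (card_eq_zero.mpr hempty)
  obtain ⟨hk₀S, hT⟩ := mem_filter.mp hk₀
  have himage := (image_erase_eq_of_subset_image_erase hk₀S hcard hT).1
  have hck₀ : c k₀ ∈ T := by
    refine (mem_insert.mp (hc k₀ hk₀S)).resolve_left fun h => hfull fun m hm => ?_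
    rcases mem_insert.mp hm with rfl | hm
    · exact h ▸ mem_image_of_mem c hk₀S
    · exact image_subset_image (erase_subset k₀ S) (himage ▸ hm)
  -- the label of `k₀` occurs again at `k₁`, and `k₀`, `k₁` are the only facets carrying `T`
  obtain ⟨k₁, hk₁, hck₁⟩ := mem_image.mp (himage ▸ hck₀)
  obtain ⟨hk₁k₀, hk₁S⟩ := mem_erase.mp hk₁
  refine Or.inr (card_eq_two.mpr ⟨k₀, k₁, Ne.symm hk₁k₀, Finset.ext fun k => ⟨fun hk => ?_,
    fun hk => ?_⟩⟩)
  · by_contra hne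
    simp only [mem_insert, mem_singleton, not_or] at hne
    obtain ⟨hkS, hTk⟩ := mem_filter.mp hk
    exact hk₁k₀ ((image_erase_eq_of_subset_image_erase hkS hcard hTk).2
      (mem_erase.mpr ⟨Ne.symm hne.1, hk₀S⟩) (mem_erase.mpr ⟨Ne.symm hne.2, hk₁S⟩) hck₁.symm).symm
  · rcases mem_insert.mp hk with rfl | hk
    · exact hk₀
    rw [mem_singleton.mp hk]
    refine mem_filter.mpr ⟨hk₁S, fun m hm => ?_⟩
    obtain ⟨j, hj, rfl⟩ := mem_image.mp (himage ▸ hm)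
    obtain ⟨hjk₀, hjS⟩ := mem_erase.mp hj
    by_cases hjk₁ : j = k₁
    · rw [hjk₁, hck₁]
      exact mem_image_of_mem c (mem_erase.mpr ⟨hk₁k₀.symm, hk₀S⟩)
    · exact mem_image_of_mem c (mem_erase.mpr ⟨hjk₁, hjS⟩)

/-- Sperner's lemma inside a single simplex with vertex set `S`. -/
theorem card_filter_subset_image_erase_mod_two (hcard : #S = #T + 1) (htop : top ∉ T)
    (hc : ∀ k ∈ S, c k ∈ insert top T) :
    (#{k ∈ S | T ⊆ (S.erase k).image c} : ZMod 2) =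
      if insert top T ⊆ S.image c then 1 else 0 := by
  split_ifs with hfull
  · rw [card_filter_subset_image_erase_of_subset hcard htop hfull, Nat.cast_one]
  · rcases card_filter_subset_image_erase_of_not_subset hcard hc hfull with h | h <;> rw [h] <;> rfl

theorem card_eq_card_filter_fixed_mod_two {P : Finset α} (g : α → α) (hg : ∀ q ∈ P, g q ∈ P)
    (hgg : ∀ q ∈ P, g (g q) = q) : (#P : ZMod 2) = #{q ∈ P | g q = q} := by
  have hmoved : (#{q ∈ P | ¬g q = q} : ZMod 2) = 0 := by
    rw [card_filter, Nat.cast_sum]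
    refine sum_involution (fun q _ => g q) (fun q hq => ?_) (fun q _ h => by simpa using h) hg hgg
    by_cases h : g q = q
    · simp [h]
    · simp only [hgg q hq, h, Ne.symm h, not_false_eq_true, if_true, Nat.cast_one]
      decide
  rw [← card_filter_add_card_filter_not (fun q => g q = q), Nat.cast_add, hmoved, add_zero]

end Finset

namespace Kuhn

def rotate (N : ℕ) : Equiv.Perm ℕ := (List.range N).formPerm

theorem rotate_apply_of_lt {N t : ℕ} (ht : t < N) : rotate N t = (t + 1) % N := by
  have := List.formPerm_apply_getElem _ (List.nodup_range (n := N)) t (by simpa using ht)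
  simpa [rotate] using this

theorem rotate_apply_of_le {N t : ℕ} (ht : N ≤ t) : rotate N t = t :=
  List.formPerm_apply_of_notMem (by simpa using ht)

theorem rotate_inv_apply_of_le {N t : ℕ} (ht : N ≤ t) : (rotate N)⁻¹ t = t := by
  rw [Equiv.Perm.inv_eq_iff_eq, rotate_apply_of_le ht]

theorem rotate_apply (n t : ℕ) :
    rotate (n + 1) t = if t < n then t + 1 else if t = n then 0 else t := by
  split_ifs with h₁ h₂
  · rw [rotate_apply_of_lt (by omega), Nat.mod_eq_of_lt (by omega)]
  · rw [rotate_apply_of_lt (by omega), h₂, Nat.mod_self]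
  · exact rotate_apply_of_le (by omega)

theorem rotate_inv_apply (n t : ℕ) :
    (rotate (n + 1))⁻¹ t = if t = 0 then n else if t ≤ n then t - 1 else t := by
  rw [Equiv.Perm.inv_eq_iff_eq]
  split_ifs with h₁ h₂
  · simp [rotate_apply, h₁]
  · rw [rotate_apply, if_pos (by omega)]
    omega
  · exact (rotate_apply_of_le (by omega)).symm

theorem rotate_self (n : ℕ) : rotate (n + 1) n = 0 := by
  rw [rotate_apply_of_lt n.lt_add_one, Nat.mod_self]

theorem rotate_eq_zero_iff {n t : ℕ} : rotate (n + 1) t = 0 ↔ t = n := by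
  rw [← rotate_self, Equiv.apply_eq_iff_eq]

theorem rotate_inv_eq_iff {n t : ℕ} : (rotate (n + 1))⁻¹ t = n ↔ t = 0 := by
  rw [Equiv.Perm.inv_eq_iff_eq, rotate_self]

/-- A Kuhn simplex, given by its first vertex and the order (`rank`) in which its edges raise the
coordinates. Points of `ℕ^N` are functions `ℕ → ℕ` vanishing from `N` on, so that a simplex of
dimension `N` is literally one of dimension `N + 1` lying in the face `x_N = 0`. -/
@[ext]
structure Simplex where
  base : ℕ → ℕ
  rank : Equiv.Perm ℕ

def Simplex.vertex (s : Simplex) (j : ℕ) : ℕ → ℕ :=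
  fun i => s.base i + if s.rank i < j then 1 else 0

structure Simplex.InGrid (N p : ℕ) (s : Simplex) : Prop where
  rank_of_le : ∀ i, N ≤ i → s.rank i = i
  base_of_le : ∀ i, N ≤ i → s.base i = 0
  base_lt : ∀ i < N, s.base i < p

section Grid

variable {n p : ℕ} {s : Simplex}

theorem Simplex.InGrid.vertex_of_le {N j i : ℕ} (hs : s.InGrid N p) (hj : j ≤ N) (hi : N ≤ i) :
    s.vertex j i = 0 := by
  simp [Simplex.vertex, hs.rank_of_le i hi, hs.base_of_le i hi, hj.trans hi]

theorem Simplex.InGrid.succ (hp : 0 < p) (hs : s.InGrid n p) : s.InGrid (n + 1) p :=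
  ⟨fun i hi => hs.rank_of_le i (by omega), fun i hi => hs.base_of_le i (by omega),
    fun i hi => if h : i < n then hs.base_lt i h else by rw [hs.base_of_le i (by omega)]; exact hp⟩

theorem finite_setOf_inGrid (N p : ℕ) : {s : Simplex | s.InGrid N p}.Finite := by
  let embed (q : (Fin N → Fin p) × Equiv.Perm {i // i < N}) : Simplex :=
    ⟨fun i => if h : i < N then q.1 ⟨i, h⟩ else 0, Equiv.Perm.ofSubtype q.2⟩
  refine (Set.finite_range embed).subset fun s hs => ?_
  have hrank : ∀ i, s.rank i < N ↔ i < N := fun i => by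
    refine ⟨fun h => ?_, fun h => ?_⟩
    · by_contra hi
      rw [hs.rank_of_le i (not_lt.mp hi)] at h
      exact hi h
    · by_contra hri
      rw [s.rank.injective (hs.rank_of_le _ (not_lt.mp hri))] at hri
      exact hri h
  refine ⟨(fun i => ⟨s.base i, hs.base_lt i i.2⟩, s.rank.subtypePerm hrank), ?_⟩
  ext i
  · simp only [embed]
    split_ifs with h
    · rfl
    · exact (hs.base_of_le i (not_lt.mp h)).symm
  · exact congrArg (· i) (Equiv.Perm.ofSubtype_subtypePerm hrank fun i hi => by
      by_contra h
      exact hi (hs.rank_of_le i (not_lt.mp h)))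

noncomputable def simplices (N p : ℕ) : Finset Simplex := (finite_setOf_inGrid N p).toFinset

theorem mem_simplices {N : ℕ} : s ∈ simplices N p ↔ s.InGrid N p :=
  Set.Finite.mem_toFinset _

end Grid

section Pivot

/-- Kuhn's pivot rule: the other simplex containing the facet of `s` opposite to its vertex `k`,
together with the position of its vertex opposite to that facet. -/
def pivot (N : ℕ) (s : Simplex) (k : ℕ) : Simplex × ℕ :=
  if k = 0 then (⟨fun i => s.base i + if s.rank i = 0 then 1 else 0, (rotate N)⁻¹ * s.rank⟩, N)
  else if k = N then
    (⟨fun i => s.base i - if s.rank i = N - 1 then 1 else 0, rotate N * s.rank⟩, 0)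
  else (⟨s.base, Equiv.swap (k - 1) k * s.rank⟩, k)

/-- The facet opposite to vertex `k` does not lie in the boundary of the grid `{0, …, p}^N`,
so that the pivot stays in the grid. -/
def Pivotable (N p : ℕ) (s : Simplex) (k : ℕ) : Prop :=
  (k = 0 → ∀ i, s.rank i = 0 → s.base i + 1 < p) ∧
    (k = N → ∀ i, s.rank i = N - 1 → 0 < s.base i)

variable {n p k : ℕ} {s : Simplex}

theorem vertex_pivot_zero {j : ℕ} (hj : j ≤ n) :
    (pivot (n + 1) s 0).1.vertex j = s.vertex (j + 1) := by
  funext i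
  simp only [pivot, if_true, Simplex.vertex, Equiv.Perm.mul_apply, rotate_inv_apply]
  split_ifs <;> omega

theorem vertex_pivot_last (hpiv : Pivotable (n + 1) p s (n + 1)) {j : ℕ} (hj : j ≤ n) :
    (pivot (n + 1) s (n + 1)).1.vertex (j + 1) = s.vertex j := by
  funext i
  have := hpiv.2 rfl i
  simp only [pivot, Nat.add_one_ne_zero, if_false, if_true, Simplex.vertex, Equiv.Perm.mul_apply,
    rotate_apply, Nat.add_sub_cancel] at this ⊢
  split_ifs at this ⊢ <;> omega

theorem vertex_pivot_of_ne (hk₀ : k ≠ 0) (hkN : k ≠ n + 1) {j : ℕ} (hjk : j ≠ k) :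
    (pivot (n + 1) s k).1.vertex j = s.vertex j := by
  funext i
  simp only [pivot, hk₀, hkN, if_false, Simplex.vertex, Equiv.Perm.mul_apply,
    Equiv.swap_apply_def]
  split_ifs <;> omega

theorem exists_vertex_pivot (hpiv : Pivotable (n + 1) p s k) {j : ℕ} (hj : j ≤ n + 1)
    (hjk : j ≠ k) : ∃ j' ≤ n + 1, j' ≠ (pivot (n + 1) s k).2 ∧
      (pivot (n + 1) s k).1.vertex j' = s.vertex j := by
  by_cases hk₀ : k = 0
  · subst hk₀
    refine ⟨j - 1, by omega, by simp only [pivot, if_true]; omega, ?_⟩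
    rw [vertex_pivot_zero (by omega), Nat.sub_add_cancel (by omega)]
  by_cases hkN : k = n + 1
  · subst hkN
    exact ⟨j + 1, by omega, by simp [pivot], vertex_pivot_last hpiv (by omega)⟩
  · exact ⟨j, hj, by simpa [pivot, hk₀, hkN] using hjk, vertex_pivot_of_ne hk₀ hkN hjk⟩

theorem pivot_pivot (hpiv : Pivotable (n + 1) p s k) :
    pivot (n + 1) (pivot (n + 1) s k).1 (pivot (n + 1) s k).2 = (s, k) := by
  by_cases hk₀ : k = 0
  · subst hk₀
    simp only [pivot, if_true, Nat.add_one_ne_zero, if_false, mul_inv_cancel_left,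
      Prod.mk.injEq, and_true]
    ext i
    · simp only [Equiv.Perm.mul_apply, Nat.add_sub_cancel, rotate_inv_eq_iff]
    · rfl
  by_cases hkN : k = n + 1
  · subst hkN
    simp only [pivot, if_true, Nat.add_one_ne_zero, if_false, inv_mul_cancel_left,
      Prod.mk.injEq, and_true]
    ext i
    · have := hpiv.2 rfl i
      simp only [Equiv.Perm.mul_apply, rotate_eq_zero_iff, Nat.add_sub_cancel] at this ⊢
      split_ifs at this ⊢ <;> omega
    · rfl
  · simp [pivot, hk₀, hkN]

theorem pivot_ne : pivot (n + 1) s k ≠ (s, k) := by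
  unfold pivot
  split_ifs with hk₀ hkN
  · simp [hk₀]
  · simp [hkN]
  · intro h
    have hrank := congrArg (·.1.rank) h
    rw [mul_eq_right, Equiv.swap_eq_one_iff] at hrank
    omega

theorem pivot_snd_le (hk : k ≤ n + 1) : (pivot (n + 1) s k).2 ≤ n + 1 := by
  unfold pivot
  split_ifs <;> simp [hk]

theorem Simplex.InGrid.pivot (hs : s.InGrid (n + 1) p) (hk : k ≤ n + 1)
    (hpiv : Pivotable (n + 1) p s k) : (pivot (n + 1) s k).1.InGrid (n + 1) p := by
  unfold Kuhn.pivot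
  split_ifs with hk₀ hkN
  · refine ⟨fun i hi => ?_, fun i hi => ?_, fun i hi => ?_⟩
    · rw [Equiv.Perm.mul_apply, hs.rank_of_le i hi, rotate_inv_apply_of_le hi]
    · change s.base i + (if s.rank i = 0 then 1 else 0) = 0
      rw [hs.rank_of_le i hi, hs.base_of_le i hi, if_neg (by omega)]
    · have := hpiv.1 hk₀ i
      have := hs.base_lt i hi
      dsimp only
      split_ifs <;> omega
  · refine ⟨fun i hi => ?_, fun i hi => ?_, fun i hi => ?_⟩
    · rw [Equiv.Perm.mul_apply, hs.rank_of_le i hi, rotate_apply_of_le hi]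
    · simp [hs.base_of_le i hi]
    · have := hs.base_lt i hi
      dsimp only
      omega
  · refine ⟨fun i hi => ?_, hs.base_of_le, hs.base_lt⟩
    rw [Equiv.Perm.mul_apply, hs.rank_of_le i hi, Equiv.swap_apply_of_ne_of_ne] <;> omega

theorem Pivotable.pivot (hs : s.InGrid (n + 1) p) (hpiv : Pivotable (n + 1) p s k) :
    Pivotable (n + 1) p (pivot (n + 1) s k).1 (pivot (n + 1) s k).2 := by
  unfold Kuhn.pivot Pivotable
  split_ifs with hk₀ hkN
  · refine ⟨by simp, fun _ i hi => ?_⟩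
    simp only [Equiv.Perm.mul_apply, Nat.add_sub_cancel, rotate_inv_eq_iff] at hi ⊢
    simp [hi]
  · refine ⟨fun _ i hi => ?_, by simp⟩
    have hi' : s.rank i = n := by simpa only [Equiv.Perm.mul_apply, rotate_eq_zero_iff] using hi
    have hin : i < n + 1 := by
      by_contra h
      rw [hs.rank_of_le i (by omega)] at hi'
      omega
    have := hs.base_lt i hin
    have := hpiv.2 hkN i (by simpa using hi')
    simp only [hi', Nat.add_sub_cancel, if_true]
    omega
  · exact ⟨fun h => absurd h hk₀, fun h => absurd h hkN⟩

theorem Simplex.InGrid.not_pivotable_last (hs : s.InGrid n p) :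
    ¬Pivotable (n + 1) p s (n + 1) :=
  fun hpiv => (hpiv.2 rfl n (by simpa using hs.rank_of_le n le_rfl)).ne'
    (hs.base_of_le n le_rfl)

end Pivot

section Labels

variable (ℓ : (ℕ → ℕ) → ℕ)

def IsFull (N : ℕ) (s : Simplex) : Prop :=
  range (N + 1) ⊆ (range (N + 1)).image fun j => ℓ (s.vertex j)

def IsFullFacet (n : ℕ) (s : Simplex) (k : ℕ) : Prop :=
  range (n + 1) ⊆ ((range (n + 2)).erase k).image fun j => ℓ (s.vertex j)

instance (N : ℕ) : DecidablePred (IsFull ℓ N) := fun _ => by unfold IsFull; infer_instance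

instance (n : ℕ) (s : Simplex) : DecidablePred (IsFullFacet ℓ n s) :=
  fun _ => by unfold IsFullFacet; infer_instance

noncomputable def fullFacets (n p : ℕ) : Finset (Simplex × ℕ) :=
  {q ∈ simplices (n + 1) p ×ˢ range (n + 2) | IsFullFacet ℓ n q.1 q.2}

variable {ℓ} {n p k : ℕ} {s : Simplex}

theorem mem_fullFacets {q : Simplex × ℕ} :
    q ∈ fullFacets ℓ n p ↔ q.1.InGrid (n + 1) p ∧ q.2 ≤ n + 1 ∧ IsFullFacet ℓ n q.1 q.2 := by
  simp [fullFacets, mem_simplices, Nat.lt_succ_iff, and_assoc]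

theorem isFullFacet_last_iff : IsFullFacet ℓ n s (n + 1) ↔ IsFull ℓ n s := by
  rw [IsFullFacet, IsFull, range_add_one (n := n + 1), erase_insert notMem_range_self]

theorem IsFullFacet.pivot (hpiv : Pivotable (n + 1) p s k) (h : IsFullFacet ℓ n s k) :
    IsFullFacet ℓ n (pivot (n + 1) s k).1 (pivot (n + 1) s k).2 := by
  intro m hm
  obtain ⟨j, hj, rfl⟩ := mem_image.mp (h hm)
  obtain ⟨hjk, hj⟩ := mem_erase.mp hj
  obtain ⟨j', hj', hj'k, hv⟩ :=
    exists_vertex_pivot hpiv (Nat.lt_succ_iff.mp (mem_range.mp hj)) hjk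
  exact mem_image.mpr ⟨j', mem_erase.mpr ⟨hj'k, mem_range.mpr (by omega)⟩, by rw [hv]⟩

theorem IsFullFacet.pivotable_zero (hs : s.InGrid (n + 1) p)
    (htop : ∀ x, ∀ i < n + 1, x i = p → ℓ x ≠ i) (h : IsFullFacet ℓ n s 0) :
    Pivotable (n + 1) p s 0 := by
  refine ⟨fun _ i hi => ?_, fun h => absurd h (by omega)⟩
  have hin : i < n + 1 := by
    by_contra hin
    rw [hs.rank_of_le i (not_lt.mp hin)] at hi
    omega
  refine lt_of_le_of_ne (hs.base_lt i hin) fun hp => ?_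
  obtain ⟨j, hj, hℓj⟩ := mem_image.mp (h (mem_range.mpr hin))
  refine htop _ i hin ?_ hℓj
  simp [Simplex.vertex, hi, ← hp, Nat.pos_of_ne_zero (mem_erase.mp hj).1]

theorem IsFullFacet.inGrid_of_not_pivotable (hs : s.InGrid (n + 1) p)
    (hzero : ∀ x i, x i = 0 → ℓ x ≤ i) (h : IsFullFacet ℓ n s (n + 1))
    (hpiv : ¬Pivotable (n + 1) p s (n + 1)) : s.InGrid n p := by
  simp only [Pivotable, Nat.add_one_ne_zero, false_imp_iff, true_and, Nat.add_sub_cancel,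
    not_forall, not_lt, Nat.le_zero, forall_const] at hpiv
  obtain ⟨i, hi, hbase⟩ := hpiv
  have hin : i ≤ n := by
    by_contra hin
    rw [hs.rank_of_le i (by omega)] at hi
    omega
  -- the facet lies in the face `x_i = 0`, so its label `n` forces `i = n`
  obtain ⟨j, hj, hℓj⟩ := mem_image.mp (h (mem_range.mpr n.lt_add_one))
  obtain ⟨hjn, hj⟩ := mem_erase.mp hj
  have hjn' : j ≤ n := by
    have := mem_range.mp hj
    omega
  have : ℓ (s.vertex j) ≤ i := hzero _ _ (by simp [Simplex.vertex, hi, hbase, hjn'])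
  obtain rfl : i = n := by omega
  refine ⟨fun i hi' => ?_, fun i hi' => ?_, fun i hi' => hs.base_lt i (by omega)⟩
  · rcases hi'.eq_or_lt with rfl | hi'
    · exact hi
    · exact hs.rank_of_le i hi'
  · rcases hi'.eq_or_lt with rfl | hi'
    · exact hbase
    · exact hs.base_of_le i hi'

theorem card_fullFacets_eq_card_isFull_succ (hzero : ∀ x i, x i = 0 → ℓ x ≤ i) (n p : ℕ) :
    (#(fullFacets ℓ n p) : ZMod 2) = #{s ∈ simplices (n + 1) p | IsFull ℓ (n + 1) s} := by
  simp only [fullFacets, card_filter, Nat.cast_sum, sum_product]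
  refine sum_congr rfl fun s hs => ?_
  have hlabel : ∀ j ∈ range (n + 2), ℓ (s.vertex j) ∈ insert (n + 1) (range (n + 1)) :=
    fun j hj => by
      rw [← range_add_one, mem_range, Nat.lt_succ_iff]
      exact hzero _ _ ((mem_simplices.mp hs).vertex_of_le (Nat.lt_succ_iff.mp (mem_range.mp hj))
        le_rfl)
  rw [← Nat.cast_sum, ← card_filter, Nat.cast_ite, Nat.cast_one, Nat.cast_zero]
  have := card_filter_subset_image_erase_mod_two (by simp) notMem_range_self hlabel
  rwa [← range_add_one] at this

open Classical in
noncomputable def pivotIfPivotable (N p : ℕ) (q : Simplex × ℕ) : Simplex × ℕ :=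
  if Pivotable N p q.1 q.2 then pivot N q.1 q.2 else q

theorem pivotIfPivotable_of_pivotable {q : Simplex × ℕ} (hpiv : Pivotable (n + 1) p q.1 q.2) :
    pivotIfPivotable (n + 1) p q = pivot (n + 1) q.1 q.2 := by
  classical
  exact if_pos hpiv

theorem pivotIfPivotable_of_not_pivotable {q : Simplex × ℕ}
    (hpiv : ¬Pivotable (n + 1) p q.1 q.2) : pivotIfPivotable (n + 1) p q = q := by
  classical
  exact if_neg hpiv

theorem pivotIfPivotable_eq_self_iff {q : Simplex × ℕ} :
    pivotIfPivotable (n + 1) p q = q ↔ ¬Pivotable (n + 1) p q.1 q.2 := by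
  by_cases hpiv : Pivotable (n + 1) p q.1 q.2
  · simpa [pivotIfPivotable_of_pivotable hpiv, hpiv] using pivot_ne
  · simp [pivotIfPivotable_of_not_pivotable hpiv, hpiv]

theorem pivotIfPivotable_mem_fullFacets {q : Simplex × ℕ} (hq : q ∈ fullFacets ℓ n p) :
    pivotIfPivotable (n + 1) p q ∈ fullFacets ℓ n p := by
  obtain ⟨hs, hk, hfacet⟩ := mem_fullFacets.mp hq
  by_cases hpiv : Pivotable (n + 1) p q.1 q.2
  · rw [pivotIfPivotable_of_pivotable hpiv]
    exact mem_fullFacets.mpr ⟨hs.pivot hk hpiv, pivot_snd_le hk, hfacet.pivot hpiv⟩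
  · rwa [pivotIfPivotable_of_not_pivotable hpiv]

theorem pivotIfPivotable_pivotIfPivotable {q : Simplex × ℕ} (hq : q.1.InGrid (n + 1) p) :
    pivotIfPivotable (n + 1) p (pivotIfPivotable (n + 1) p q) = q := by
  by_cases hpiv : Pivotable (n + 1) p q.1 q.2
  · rw [pivotIfPivotable_of_pivotable hpiv, pivotIfPivotable_of_pivotable (hpiv.pivot hq),
      pivot_pivot hpiv]
  · rw [pivotIfPivotable_of_not_pivotable hpiv, pivotIfPivotable_of_not_pivotable hpiv]

open Classical in
theorem filter_fullFacets_not_pivotable (hp : 0 < p) (hzero : ∀ x i, x i = 0 → ℓ x ≤ i)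
    (htop : ∀ x, ∀ i < n + 1, x i = p → ℓ x ≠ i) :
    {q ∈ fullFacets ℓ n p | pivotIfPivotable (n + 1) p q = q} =
      {s ∈ simplices n p | IsFull ℓ n s}.map
        ⟨fun s => (s, n + 1), fun _ _ h => congrArg Prod.fst h⟩ := by
  ext ⟨s, k⟩
  simp only [mem_filter, pivotIfPivotable_eq_self_iff, mem_map, mem_simplices]
  constructor
  · rintro ⟨hq, hpiv⟩
    obtain ⟨hs, hk, hfacet⟩ := mem_fullFacets.mp hq
    obtain rfl : k = n + 1 := by
      by_contra hkn
      rcases Nat.eq_zero_or_pos k with rfl | hk₀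
      · exact hpiv (hfacet.pivotable_zero hs htop)
      · exact hpiv ⟨fun h => absurd h (by omega), fun h => absurd h hkn⟩
    exact ⟨s, ⟨hfacet.inGrid_of_not_pivotable hs hzero hpiv, isFullFacet_last_iff.mp hfacet⟩, rfl⟩
  · rintro ⟨s, ⟨hs, hfull⟩, h⟩
    obtain ⟨rfl, rfl⟩ := Prod.mk.inj h
    exact ⟨mem_fullFacets.mpr ⟨hs.succ hp, le_rfl, isFullFacet_last_iff.mpr hfull⟩,
      hs.not_pivotable_last⟩

theorem card_fullFacets_eq_card_isFull (hp : 0 < p) (hzero : ∀ x i, x i = 0 → ℓ x ≤ i)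
    (htop : ∀ x, ∀ i < n + 1, x i = p → ℓ x ≠ i) :
    (#(fullFacets ℓ n p) : ZMod 2) = #{s ∈ simplices n p | IsFull ℓ n s} := by
  classical
  rw [card_eq_card_filter_fixed_mod_two _ (fun _ => pivotIfPivotable_mem_fullFacets)
      (fun _ hq => pivotIfPivotable_pivotIfPivotable (mem_fullFacets.mp hq).1),
    filter_fullFacets_not_pivotable hp hzero htop, card_map]

theorem filter_isFull_simplices_zero (hzero : ∀ x i, x i = 0 → ℓ x ≤ i) (p : ℕ) :
    {s ∈ simplices 0 p | IsFull ℓ 0 s} = {⟨0, 1⟩} := by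
  ext s
  simp only [mem_filter, mem_simplices, mem_singleton]
  constructor
  · rintro ⟨hs, -⟩
    ext i
    · exact hs.base_of_le i (Nat.zero_le i)
    · exact hs.rank_of_le i (Nat.zero_le i)
  · rintro rfl
    refine ⟨⟨fun _ _ => rfl, fun _ _ => rfl, fun i hi => absurd hi (Nat.not_lt_zero i)⟩, ?_⟩
    intro m hm
    rw [mem_range, Nat.lt_one_iff] at hm
    subst hm
    exact mem_image.mpr ⟨0, mem_range.mpr zero_lt_one,
      Nat.le_zero.mp (hzero _ 0 (by simp [Simplex.vertex]))⟩

theorem card_filter_isFull_mod_two (hp : 0 < p) (hzero : ∀ x i, x i = 0 → ℓ x ≤ i) :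
    ∀ N, (∀ x, ∀ i < N, x i = p → ℓ x ≠ i) → (#{s ∈ simplices N p | IsFull ℓ N s} : ZMod 2) = 1
  | 0, _ => by rw [filter_isFull_simplices_zero hzero, card_singleton, Nat.cast_one]
  | n + 1, htop => by
    rw [← card_fullFacets_eq_card_isFull_succ hzero, card_fullFacets_eq_card_isFull hp hzero htop,
      card_filter_isFull_mod_two hp hzero n fun x i hi => htop x i (by omega)]

theorem exists_isFull (hp : 0 < p) (hzero : ∀ x i, x i = 0 → ℓ x ≤ i) {N : ℕ}
    (htop : ∀ x, ∀ i < N, x i = p → ℓ x ≠ i) : ∃ s : Simplex, s.InGrid N p ∧ IsFull ℓ N s := by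
  have hodd := card_filter_isFull_mod_two hp hzero N htop
  obtain ⟨s, hs⟩ := card_ne_zero.mp fun h => by
    rw [h, Nat.cast_zero] at hodd
    exact zero_ne_one hodd
  exact ⟨s, mem_simplices.mp (mem_filter.mp hs).1, (mem_filter.mp hs).2⟩

end Labels

end Kuhn

section Cube

open Set

theorem unitCube_eq_pi (n : ℕ) : unitCube n = univ.pi fun _ => Icc 0 1 := by
  ext x
  simp only [unitCube, mem_pi, mem_univ, true_implies, mem_ofPred_eq]

instance (n : ℕ) : CompactSpace (unitCube n) :=
  isCompact_iff_compactSpace.mp (unitCube_eq_pi n ▸ isCompact_univ_pi fun _ => isCompact_Icc)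

noncomputable def gridPoint (n p : ℕ) (x : ℕ → ℕ) : unitCube n :=
  ⟨fun i => projIcc 0 1 zero_le_one ((x i : ℝ) / p), fun _ => (projIcc 0 1 _ _).2⟩

theorem gridPoint_apply_of_eq_zero {n p : ℕ} {x : ℕ → ℕ} {i : Fin n} (h : x i = 0) :
    (gridPoint n p x : Fin n → ℝ) i = 0 := by
  simp [gridPoint, h]

theorem gridPoint_apply_of_eq {n p : ℕ} (hp : 0 < p) {x : ℕ → ℕ} {i : Fin n} (h : x i = p) :
    (gridPoint n p x : Fin n → ℝ) i = 1 := by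
  simp [gridPoint, h, hp.ne']

theorem dist_gridPoint_vertex_le (n p : ℕ) (s : Kuhn.Simplex) (j : ℕ) :
    dist (gridPoint n p (s.vertex j)) (gridPoint n p s.base) ≤ 1 / p := by
  rw [Subtype.dist_eq, dist_pi_le_iff (by positivity)]
  intro i
  refine (abs_projIcc_sub_projIcc zero_le_one).trans ?_
  rw [Kuhn.Simplex.vertex, ← sub_div, abs_div, Nat.abs_cast]
  gcongr
  split_ifs <;> simp

variable {n : ℕ} (F : unitCube n → unitCube n) (y : unitCube n) (p : ℕ)

noncomputable def label (x : ℕ → ℕ) : ℕ :=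
  sInf {j | n ≤ j ∨ ∃ i : Fin n, (i : ℕ) = j ∧
    (x i = 0 ∨ (F (gridPoint n p x) : Fin n → ℝ) i < (y : Fin n → ℝ) i)}

variable {F y p}

theorem label_mem (x : ℕ → ℕ) : label F y p x ∈ {j | n ≤ j ∨ ∃ i : Fin n, (i : ℕ) = j ∧
    (x i = 0 ∨ (F (gridPoint n p x) : Fin n → ℝ) i < (y : Fin n → ℝ) i)} :=
  Nat.sInf_mem ⟨n, Or.inl le_rfl⟩

theorem label_le_of_eq_zero {x : ℕ → ℕ} {i : ℕ} (h : x i = 0) : label F y p x ≤ i := by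
  refine Nat.sInf_le ?_
  by_cases hi : i < n
  · exact Or.inr ⟨⟨i, hi⟩, rfl, Or.inl h⟩
  · exact Or.inl (not_lt.mp hi)

theorem label_ne_of_eq (hO : ∀ (i : Fin n) (x : unitCube n),
      (x : Fin n → ℝ) i = 1 → (F x : Fin n → ℝ) i = 1) (hp : 0 < p) {x : ℕ → ℕ} {i : ℕ}
    (hi : i < n) (h : x i = p) : label F y p x ≠ i := by
  intro hlabel
  rcases label_mem (F := F) (y := y) (p := p) x with hle | ⟨i', hi', hx | hlt⟩
  · omega
  · rw [hi', hlabel, h] at hx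
    exact hp.ne' hx
  · rw [hO i' _ (gridPoint_apply_of_eq hp (by rw [hi', hlabel, h]))] at hlt
    exact not_lt.mpr (y.2 i').2 hlt

theorem apply_le_of_label_eq (hA : ∀ (i : Fin n) (x : unitCube n),
      (x : Fin n → ℝ) i = 0 → (F x : Fin n → ℝ) i = 0) {x : ℕ → ℕ} {i : Fin n}
    (h : label F y p x = i) : (F (gridPoint n p x) : Fin n → ℝ) i ≤ (y : Fin n → ℝ) i := by
  rcases label_mem (F := F) (y := y) (p := p) x with hle | ⟨i', hi', hx | hlt⟩
  · omega
  · obtain rfl : i' = i := Fin.ext (hi'.trans h)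
    rw [hA i' _ (gridPoint_apply_of_eq_zero hx)]
    exact (y.2 i').1
  · obtain rfl : i' = i := Fin.ext (hi'.trans h)
    exact hlt.le

theorem le_apply_of_lt_label {x : ℕ → ℕ} {i : Fin n} (h : (i : ℕ) < label F y p x) :
    (y : Fin n → ℝ) i ≤ (F (gridPoint n p x) : Fin n → ℝ) i :=
  not_lt.mp fun hlt => not_lt.mpr (Nat.sInf_le (Or.inr ⟨i, rfl, Or.inr hlt⟩)) h

theorem exists_dist_apply_lt (hF : Continuous F)
    (hA : ∀ (i : Fin n) (x : unitCube n), (x : Fin n → ℝ) i = 0 → (F x : Fin n → ℝ) i = 0)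
    (hO : ∀ (i : Fin n) (x : unitCube n), (x : Fin n → ℝ) i = 1 → (F x : Fin n → ℝ) i = 1)
    {ε : ℝ} (hε : 0 < ε) : ∃ x, dist (F x) y < ε := by
  obtain ⟨δ, hδ, hFδ⟩ :=
    Metric.uniformContinuous_iff.mp (CompactSpace.uniformContinuous_of_continuous hF) ε hε
  obtain ⟨m, hm⟩ := exists_nat_one_div_lt hδ
  have hp : 0 < m + 1 := m.succ_pos
  obtain ⟨s, -, hfull⟩ := Kuhn.exists_isFull (ℓ := label F y (m + 1)) hp
    (fun _ _ => label_le_of_eq_zero) fun _ _ hi => label_ne_of_eq hO hp hi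
  have hnear : ∀ j, dist (F (gridPoint n (m + 1) (s.vertex j))) (F (gridPoint n (m + 1) s.base))
      < ε := fun j => hFδ ((dist_gridPoint_vertex_le n (m + 1) s j).trans_lt (by exact_mod_cast hm))
  refine ⟨gridPoint n (m + 1) s.base, (dist_pi_lt_iff hε).mpr fun i => ?_⟩
  obtain ⟨j₁, -, hj₁⟩ := mem_image.mp (hfull (mem_range.mpr (Nat.lt_succ_of_lt i.2)))
  obtain ⟨j₂, -, hj₂⟩ := mem_image.mp (hfull (mem_range.mpr (Nat.succ_lt_succ i.2)))
  have hle := apply_le_of_label_eq hA hj₁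
  have hge := le_apply_of_lt_label (x := s.vertex j₂) (F := F) (y := y) (hj₂ ▸ i.val.lt_succ_self)
  have h₁ := (dist_pi_lt_iff hε).mp (hnear j₁) i
  have h₂ := (dist_pi_lt_iff hε).mp (hnear j₂) i
  rw [Real.dist_eq, abs_sub_lt_iff] at h₁ h₂ ⊢
  constructor <;> linarith

end Cube

theorem statement15_general (n : ℕ)
    (F : ↥(unitCube n) → ↥(unitCube n)) (hF : Continuous F)
    (hA : ∀ (i : Fin n) (x : ↥(unitCube n)),
      (x : Fin n → ℝ) i = 0 → (F x : Fin n → ℝ) i = 0)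
    (hO : ∀ (i : Fin n) (x : ↥(unitCube n)),
      (x : Fin n → ℝ) i = 1 → (F x : Fin n → ℝ) i = 1) :
    Function.Surjective F := by
  intro y
  have hy : y ∈ closure (Set.range F) := Metric.mem_closure_range_iff.mpr fun ε hε => by
    obtain ⟨x, hx⟩ := exists_dist_apply_lt hF hA hO hε
    exact ⟨x, by rwa [dist_comm]⟩
  rwa [(isCompact_range hF).isClosed.closure_eq] at hy

/-- For `n ≥ 1`, a continuous self-map of the cube `[0,1]^n` preserving
each axial face `A_i = {x : x_i = 0}` and each opposite face `O_i = {x : x_i = 1}` is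
surjective. -/
theorem statement15 (n : ℕ) (hn : 1 ≤ n)
    (F : ↥(unitCube n) → ↥(unitCube n)) (hF : Continuous F)
    (hA : ∀ (i : Fin n) (x : ↥(unitCube n)),
      (x : Fin n → ℝ) i = 0 → (F x : Fin n → ℝ) i = 0)
    (hO : ∀ (i : Fin n) (x : ↥(unitCube n)),
      (x : Fin n → ℝ) i = 1 → (F x : Fin n → ℝ) i = 1) :
    Function.Surjective F :=
  statement15_general n F hF hA hO
end

section
/- Let n ≥ 1, let C ⊆ [0,1] be the standard ternary (1/3-)Cantor set, let X = C × [0,1]^n with the Euclidean metric, let Y be a metric space, and let f : X → Y be a (λ,α,β)-bi-Hölder homeomorphism. Let μ denote the (log 2/log 3)-dimensional Hausdorff measure restricted to C. Then there exists a constant A > 0 such that for every subset U ⊆ Y, μ({x ∈ C : f({x} × [0,1]^n) ∩ U ≠ ∅}) ≤ A·(diam U)^{log 2/(α·log 3)}. -/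
/-!
With `s = log 2 / log 3`, the Cantor set `C` is upper `s`-regular: `μH[s] (C ∩ [x - D, x + D])`
is at most `4 D ^ s`. Covering `C` by the `2 ^ n` intervals of `preCantorSet n` gives
`μH[s] C ≤ 1`; a half-open interval of length `3⁻¹ ^ (m + 1)` meets only one of the halves
`C / 3` and `(2 + C) / 3`, and the `3⁻¹`-similarity onto that half divides `μH[s]` by
`3 ^ s = 2`, so by induction such an interval carries mass at most `2⁻¹ ^ m`.

If the fibres of `x` and `x₀` both meet `U`, the lower Hölder bound puts two of their points
within `(l · diam U) ^ (1 / a)` of each other, hence `|x - x₀| ≤ (l · diam U) ^ (1 / a)`.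
-/

open MeasureTheory
open scoped ENNReal

/-- The set `C × [0,1]^n` inside Euclidean space `ℝ^{n+1}`, where `C` is the standard ternary
Cantor set (coordinate `0`) and the remaining `n` coordinates range over `[0,1]`. -/
def cantorCube (n : ℕ) : Set (EuclideanSpace ℝ (Fin (n + 1))) :=
  {x | x 0 ∈ cantorSet ∧ ∀ i : Fin (n + 1), i ≠ 0 → x i ∈ Set.Icc (0 : ℝ) 1}

open Set

noncomputable def cantorDim : ℝ := Real.log 2 / Real.log 3

lemma cantorDim_pos : 0 < cantorDim :=
  div_pos (Real.log_pos one_lt_two) (Real.log_pos (by norm_num))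

lemma three_rpow_cantorDim : (3 : ℝ) ^ cantorDim = 2 := by
  rw [Real.rpow_def_of_pos (by norm_num), cantorDim,
    mul_div_cancel₀ _ (Real.log_pos (by norm_num : (1 : ℝ) < 3)).ne', Real.exp_log two_pos]

lemma three_mul_rpow_cantorDim {t : ℝ} (ht : 0 ≤ t) :
    (3 * t) ^ cantorDim = 2 * t ^ cantorDim := by
  rw [Real.mul_rpow (by norm_num) ht, three_rpow_cantorDim]

lemma ofReal_inv_three_pow_rpow_cantorDim (m : ℕ) :
    ENNReal.ofReal (((3⁻¹ : ℝ) ^ m) ^ cantorDim) = 2⁻¹ ^ m := by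
  rw [← Real.rpow_pow_comm (by norm_num), Real.inv_rpow (by norm_num), three_rpow_cantorDim,
    ENNReal.ofReal_pow (by norm_num), ENNReal.ofReal_inv_of_pos two_pos, ENNReal.ofReal_ofNat]

lemma hausdorffMeasure_image_add_div_three_le (a : ℝ) (S : Set ℝ) :
    μH[cantorDim] ((fun x ↦ (a + x) / 3) '' S) ≤ 2⁻¹ * μH[cantorDim] S := by
  have hlip : LipschitzWith 3⁻¹ fun x : ℝ ↦ (a + x) / 3 := by
    refine LipschitzWith.of_dist_le_mul fun x y ↦ ?_
    rw [Real.dist_eq, Real.dist_eq, ← sub_div, add_sub_add_left_eq_sub, abs_div,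
      abs_of_pos (by norm_num : (0 : ℝ) < 3)]
    simp [div_eq_inv_mul]
  have hK : (3⁻¹ : ℝ≥0∞) ^ cantorDim = 2⁻¹ := by
    rw [← ENNReal.ofReal_ofNat 3, ← ENNReal.ofReal_inv_of_pos (by norm_num),
      ENNReal.ofReal_rpow_of_pos (by norm_num), ← pow_one (3⁻¹ : ℝ),
      ofReal_inv_three_pow_rpow_cantorDim, pow_one]
  simpa [hK] using hlip.hausdorffMeasure_image_le cantorDim_pos.le S

noncomputable def cantorEndpoints : ℕ → Finset ℝ
  | 0 => {0}
  | n + 1 => (cantorEndpoints n).image (· / 3) ∪ (cantorEndpoints n).image ((2 + ·) / 3)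

lemma card_cantorEndpoints_le (n : ℕ) : (cantorEndpoints n).card ≤ 2 ^ n := by
  induction n with
  | zero => simp [cantorEndpoints]
  | succ n ih =>
    calc _ ≤ ((cantorEndpoints n).image (· / 3)).card
          + ((cantorEndpoints n).image ((2 + ·) / 3)).card := Finset.card_union_le _ _
      _ ≤ 2 ^ n + 2 ^ n :=
          add_le_add (Finset.card_image_le.trans ih) (Finset.card_image_le.trans ih)
      _ = 2 ^ (n + 1) := by ring

lemma preCantorSet_subset_iUnion_Icc (n : ℕ) :
    preCantorSet n ⊆ ⋃ e ∈ cantorEndpoints n, Icc e (e + 3⁻¹ ^ n) := by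
  induction n with
  | zero => simp [cantorEndpoints]
  | succ n ih =>
    rintro _ (⟨y, hy, rfl⟩ | ⟨y, hy, rfl⟩) <;>
      obtain ⟨e, he, hye, hey⟩ := mem_iUnion₂.1 (ih hy)
    · refine mem_iUnion₂.2 ⟨e / 3, by simp [cantorEndpoints, he], ?_, ?_⟩ <;>
        simp only [pow_succ] <;> linarith
    · refine mem_iUnion₂.2 ⟨(2 + e) / 3, by simp [cantorEndpoints, he], ?_, ?_⟩ <;>
        simp only [pow_succ] <;> linarith

open Filter Topology in
lemma hausdorffMeasure_cantorSet_le_one : μH[cantorDim] cantorSet ≤ 1 := by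
  have hr : Tendsto (fun n : ℕ ↦ ENNReal.ofReal (3⁻¹ ^ n)) atTop (𝓝 0) := by
    rw [← ENNReal.ofReal_zero]
    exact ENNReal.tendsto_ofReal
      (tendsto_pow_atTop_nhds_zero_of_lt_one (by norm_num) (by norm_num))
  refine (Measure.hausdorffMeasure_le_liminf_sum cantorDim cantorSet _ hr
    (fun n (e : cantorEndpoints n) ↦ Icc (e : ℝ) (e + 3⁻¹ ^ n))
    (Eventually.of_forall fun n e ↦ by rw [Real.ediam_Icc, add_sub_cancel_left])
    (Eventually.of_forall fun n x hx ↦ ?_)).trans ?_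
  · obtain ⟨e, he, hxe⟩ :=
      mem_iUnion₂.1 (preCantorSet_subset_iUnion_Icc n (mem_iInter.1 hx n))
    exact mem_iUnion.2 ⟨⟨e, he⟩, hxe⟩
  refine liminf_le_of_frequently_le' (Frequently.of_forall fun n ↦ ?_)
  calc ∑ e : cantorEndpoints n, Metric.ediam (Icc (e : ℝ) (e + 3⁻¹ ^ n)) ^ cantorDim
      = (cantorEndpoints n).card * 2⁻¹ ^ n := by
        simp only [Real.ediam_Icc, add_sub_cancel_left,
          ENNReal.ofReal_rpow_of_pos (pow_pos (by norm_num : (0 : ℝ) < 3⁻¹) n),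
          ofReal_inv_three_pow_rpow_cantorDim, Finset.sum_const, Finset.card_univ,
          Fintype.card_coe, nsmul_eq_mul]
    _ ≤ 2 ^ n * 2⁻¹ ^ n := by gcongr; exact_mod_cast card_cantorEndpoints_le n
    _ = 1 := by rw [← mul_pow, ENNReal.mul_inv_cancel two_ne_zero ENNReal.ofNat_ne_top, one_pow]

/- Half-open intervals are essential: the closed interval `[1/3, 2/3]` of length `1/3` meets
both halves of the Cantor set. -/
lemma cantorSet_inter_Ico_subset_image {c L : ℝ} (hL : L ≤ 3⁻¹) :
    ∃ a c' : ℝ, cantorSet ∩ Ico c (c + L) ⊆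
      (fun y ↦ (a + y) / 3) '' (cantorSet ∩ Ico c' (c' + 3 * L)) := by
  by_cases hc : c + L ≤ 2 / 3
  · refine ⟨0, 3 * c, fun x ⟨hxC, hxc, hxL⟩ ↦
      ⟨3 * x, ⟨?_, by linarith, by linarith⟩, by ring⟩⟩
    rw [cantorSet_eq_union_halves] at hxC
    rcases hxC with ⟨y, hy, rfl⟩ | ⟨y, hy, rfl⟩
    · rwa [mul_div_cancel₀ _ three_ne_zero]
    · linarith [(cantorSet_subset_unitInterval hy).1]
  · refine ⟨2, 3 * c - 2, fun x ⟨hxC, hxc, hxL⟩ ↦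
      ⟨3 * x - 2, ⟨?_, by linarith, by linarith⟩, by ring⟩⟩
    rw [cantorSet_eq_union_halves] at hxC
    rcases hxC with ⟨y, hy, rfl⟩ | ⟨y, hy, rfl⟩
    · linarith [(cantorSet_subset_unitInterval hy).2]
    · rwa [mul_div_cancel₀ _ three_ne_zero, add_sub_cancel_left]

lemma hausdorffMeasure_cantorSet_inter_Ico_le (m : ℕ) (c : ℝ) :
    μH[cantorDim] (cantorSet ∩ Ico c (c + 3⁻¹ ^ m)) ≤ 2⁻¹ ^ m := by
  induction m generalizing c with
  | zero =>
    simpa using (measure_mono inter_subset_left).trans hausdorffMeasure_cantorSet_le_one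
  | succ m ih =>
    have hL : (3⁻¹ : ℝ) ^ (m + 1) ≤ 3⁻¹ :=
      pow_le_of_le_one (by norm_num) (by norm_num) m.succ_ne_zero
    obtain ⟨a, c', hsub⟩ := cantorSet_inter_Ico_subset_image (c := c) hL
    calc _ ≤ 2⁻¹ * μH[cantorDim] (cantorSet ∩ Ico c' (c' + 3 * 3⁻¹ ^ (m + 1))) :=
          (measure_mono hsub).trans (hausdorffMeasure_image_add_div_three_le a _)
      _ ≤ 2⁻¹ * 2⁻¹ ^ m := by
          rw [pow_succ', ← mul_assoc, mul_inv_cancel₀ three_ne_zero, one_mul]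
          gcongr
          exact ih c'
      _ = 2⁻¹ ^ (m + 1) := (pow_succ' _ _).symm

lemma hausdorffMeasure_cantorSet_inter_Icc_le (x : ℝ) {D : ℝ} (hD : 0 ≤ D) :
    μH[cantorDim] (cantorSet ∩ Icc (x - D) (x + D)) ≤ ENNReal.ofReal (4 * D ^ cantorDim) := by
  rcases hD.eq_or_lt with rfl | hD
  · have := Measure.nullSingletonClass_hausdorff ℝ cantorDim_pos
    simpa [Real.zero_rpow cantorDim_pos.ne'] using
      measure_mono_null inter_subset_right (measure_singleton (μ := μH[cantorDim]) x)
  by_cases hD3 : 1 < 3 * D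
  · have h2 : 1 < 2 * D ^ cantorDim := by
      rw [← three_mul_rpow_cantorDim hD.le]
      exact Real.one_lt_rpow hD3 cantorDim_pos
    refine (measure_mono inter_subset_left).trans (hausdorffMeasure_cantorSet_le_one.trans ?_)
    exact ENNReal.one_le_ofReal.2 (by linarith [Real.rpow_nonneg hD.le cantorDim])
  obtain ⟨n, hn_lt, hn_le⟩ := exists_nat_pow_near_of_lt_one (by positivity) (not_lt.1 hD3)
    (by norm_num : (0 : ℝ) < 3⁻¹) (by norm_num)
  have hsub : Icc (x - D) (x + D) ⊆ Ico (x - D) (x - D + 3⁻¹ ^ n) :=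
    fun y ⟨h1, h2⟩ ↦ ⟨h1, by linarith⟩
  have hpow : (3⁻¹ : ℝ) ^ n ≤ 3 * (3 * D) := by
    rw [pow_succ] at hn_lt
    linarith
  calc _ ≤ μH[cantorDim] (cantorSet ∩ Ico (x - D) (x - D + 3⁻¹ ^ n)) :=
        measure_mono (inter_subset_inter_right _ hsub)
    _ ≤ 2⁻¹ ^ n := hausdorffMeasure_cantorSet_inter_Ico_le n _
    _ = ENNReal.ofReal (((3⁻¹ : ℝ) ^ n) ^ cantorDim) :=
        (ofReal_inv_three_pow_rpow_cantorDim n).symm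
    _ ≤ ENNReal.ofReal (4 * D ^ cantorDim) := by
        refine ENNReal.ofReal_le_ofReal ((Real.rpow_le_rpow (by positivity) hpow
          cantorDim_pos.le).trans_eq ?_)
        rw [three_mul_rpow_cantorDim (by positivity), three_mul_rpow_cantorDim hD.le]
        ring

lemma isBounded_range_of_dist_le_mul_rpow {X Y : Type*} [PseudoMetricSpace X] [BoundedSpace X]
    [PseudoMetricSpace Y] {f : X → Y} {l b : ℝ} (hl : 0 ≤ l) (hb : 0 ≤ b)
    (hf : ∀ x y, dist (f x) (f y) ≤ l * dist x y ^ b) : Bornology.IsBounded (range f) := by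
  obtain ⟨C, hC⟩ := Metric.isBounded_iff.1 (BoundedSpace.bounded_univ (α := X))
  refine Metric.isBounded_iff.2 ⟨l * C ^ b, ?_⟩
  rintro _ ⟨x, rfl⟩ _ ⟨y, rfl⟩
  exact (hf x y).trans (by gcongr; exact hC trivial trivial)

lemma dist_le_mul_diam_rpow_inv {X Y : Type*} [PseudoMetricSpace X] [PseudoMetricSpace Y]
    {f : X → Y} {l a : ℝ} (hl : 0 < l) (ha : 0 < a)
    (hf : ∀ x y, (1 / l) * dist x y ^ a ≤ dist (f x) (f y)) {U : Set Y}
    (hU : Bornology.IsBounded U) {x y : X} (hx : f x ∈ U) (hy : f y ∈ U) :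
    dist x y ≤ (l * Metric.diam U) ^ a⁻¹ := by
  have h := (hf x y).trans (Metric.dist_le_diam_of_mem hU hx hy)
  rw [one_div, inv_mul_le_iff₀ hl] at h
  exact (Real.le_rpow_inv_iff_of_pos dist_nonneg (by positivity) ha).2 h

lemma isBounded_cantorCube (n : ℕ) : Bornology.IsBounded (cantorCube n) := by
  refine ((PiLp.antilipschitzWith_ofLp 2 _).isBounded_preimage
    (Metric.isBounded_Icc (0 : Fin (n + 1) → ℝ) 1)).subset
    fun x hx ↦ ⟨fun i ↦ ?_, fun i ↦ ?_⟩ <;>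
  · by_cases hi : i = 0
    · subst hi
      simp [(cantorSet_subset_unitInterval hx.1).1, (cantorSet_subset_unitInterval hx.1).2]
    · simp [(hx.2 i hi).1, (hx.2 i hi).2]

theorem statement16_general (n : ℕ) {Y : Type*} [MetricSpace Y]
    (l a b : ℝ) (hl : 0 < l) (ha : 0 < a) (hb : 0 < b)
    (f : ↥(cantorCube n) → Y) (hsurj : Function.Surjective f)
    (hf : ∀ x y : ↥(cantorCube n),
      (1 / l) * dist x y ^ a ≤ dist (f x) (f y) ∧
        dist (f x) (f y) ≤ l * dist x y ^ b) :
    ∃ A : ℝ, 0 < A ∧ ∀ U : Set Y,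
      (μH[Real.log 2 / Real.log 3] : Measure ℝ).restrict cantorSet
          {x : ℝ | x ∈ cantorSet ∧
            ∃ p : ↥(cantorCube n), (p : EuclideanSpace ℝ (Fin (n + 1))) 0 = x ∧ f p ∈ U} ≤
        ENNReal.ofReal (A * Metric.diam U ^ (Real.log 2 / (a * Real.log 3))) := by
  have : BoundedSpace (cantorCube n) := (isBounded_cantorCube n).boundedSpace_subtype
  refine ⟨4 * l ^ (cantorDim / a), by positivity, fun U ↦ ?_⟩
  set S := {x : ℝ | x ∈ cantorSet ∧
    ∃ p : ↥(cantorCube n), (p : EuclideanSpace ℝ (Fin (n + 1))) 0 = x ∧ f p ∈ U}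
  obtain hS | ⟨-, -, p₀, rfl, hp₀⟩ := S.eq_empty_or_nonempty
  · simp only [hS, measure_empty, zero_le]
  have hU : Bornology.IsBounded U :=
    (isBounded_range_of_dist_le_mul_rpow hl.le hb.le fun x y ↦ (hf x y).2).subset
      (hsurj.range_eq ▸ subset_univ U)
  set D := (l * Metric.diam U) ^ a⁻¹
  have hSD : S ⊆ cantorSet ∩ Icc (p₀.1 0 - D) (p₀.1 0 + D) := by
    rintro _ ⟨hxC, p, rfl, hp⟩
    have hdist : |p.1 0 - p₀.1 0| ≤ D := (PiLp.dist_apply_le p.1 p₀.1 0).trans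
      (dist_le_mul_diam_rpow_inv hl ha (fun x y ↦ (hf x y).1) hU hp hp₀)
    exact ⟨hxC, by linarith [abs_le.1 hdist], by linarith [abs_le.1 hdist]⟩
  calc _ ≤ μH[cantorDim] (cantorSet ∩ Icc (p₀.1 0 - D) (p₀.1 0 + D)) :=
        (Measure.restrict_apply_le _ _).trans (measure_mono hSD)
    _ ≤ ENNReal.ofReal (4 * D ^ cantorDim) :=
        hausdorffMeasure_cantorSet_inter_Icc_le _ (by positivity)
    _ = _ := by
        rw [← Real.rpow_mul (by positivity), Real.mul_rpow hl.le Metric.diam_nonneg, cantorDim,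
          inv_mul_eq_div, mul_assoc, div_div, mul_comm a]

/-- Let `f : C × [0,1]^n → Y` be a `(l, a, b)`-bi-Hölder homeomorphism and
let `μ` be the `(log 2 / log 3)`-dimensional Hausdorff measure restricted to the Cantor set
`C`. Then there is `A > 0` such that for every `U ⊆ Y`, the `μ`-measure of the set of `x ∈ C`
whose fibre `f({x} × [0,1]^n)` meets `U` is at most `A · (diam U)^{log 2 / (a log 3)}`. -/
theorem statement16 (n : ℕ) (hn : 1 ≤ n) {Y : Type*} [MetricSpace Y]
    (l a b : ℝ) (hl : 0 < l) (ha : 0 < a) (hb : 0 < b)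
    (f : ↥(cantorCube n) → Y) (hsurj : Function.Surjective f)
    (hf : ∀ x y : ↥(cantorCube n),
      (1 / l) * dist x y ^ a ≤ dist (f x) (f y) ∧
        dist (f x) (f y) ≤ l * dist x y ^ b) :
    ∃ A : ℝ, 0 < A ∧ ∀ U : Set Y,
      (μH[Real.log 2 / Real.log 3] : Measure ℝ).restrict cantorSet
          {x : ℝ | x ∈ cantorSet ∧
            ∃ p : ↥(cantorCube n), (p : EuclideanSpace ℝ (Fin (n + 1))) 0 = x ∧ f p ∈ U} ≤
        ENNReal.ofReal (A * Metric.diam U ^ (Real.log 2 / (a * Real.log 3))) :=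
  statement16_general n l a b hl ha hb f hsurj hf
end
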